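/- arXiv:1608.02279 — 2 statements merged into one kernel-verified Lean document; each statement's English description precedes it below -/
import Mathlib

section
/- Let τ be a set partition of [k] that avoids both the set partition 123 of [3] (a single block of size 3) and the set partition 12/34 of [4] (blocks {1,2} and {3,4}). Then there exist a positive integer m and a permutation σ of [m] such that τ is contained in the permutation partition of [2m] associated to σ, namely the set partition of [2m] whose blocks are {i, m + σ(i)} for 1 ≤ i ≤ m. -/
/-- `i` and `j` lie in the same block of the set partition `P` of `[n] = {1, …, n}`. -/
def SameBlock {n : ℕ} (P : Finpartition (Finset.Icc 1 n)) (i j : ℕ) : Prop :=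
  ∃ B ∈ P.parts, i ∈ B ∧ j ∈ B

instance {n : ℕ} (P : Finpartition (Finset.Icc 1 n)) (i j : ℕ) : Decidable (SameBlock P i j) :=
  inferInstanceAs (Decidable (∃ B ∈ P.parts, i ∈ B ∧ j ∈ B))

/-- The set partition `σ` of `[n]` contains the set partition `τ` of `[k]`: there is a
strictly increasing map `f : [k] → [n]` such that `i, j` lie in the same block of `τ`
iff `f i, f j` lie in the same block of `σ`.  Otherwise `σ` avoids `τ`. -/
def SetPartContains {n k : ℕ} (σ : Finpartition (Finset.Icc 1 n))
    (τ : Finpartition (Finset.Icc 1 k)) : Prop :=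
  ∃ f : ℕ → ℕ,
    (∀ i ∈ Finset.Icc 1 k, f i ∈ Finset.Icc 1 n) ∧
    (∀ i ∈ Finset.Icc 1 k, ∀ j ∈ Finset.Icc 1 k, i < j → f i < f j) ∧
    (∀ i ∈ Finset.Icc 1 k, ∀ j ∈ Finset.Icc 1 k,
      (SameBlock τ i j ↔ SameBlock σ (f i) (f j)))

/-- `A n τ` is the number of set partitions of `[n]` avoiding `τ`. -/
noncomputable def A (n : ℕ) {k : ℕ} (τ : Finpartition (Finset.Icc 1 k)) : ℕ :=
  Nat.card {σ : Finpartition (Finset.Icc 1 n) // ¬ SetPartContains σ τ}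

/-- `τ` is the layered partition `L_{a 0, …, a (r-1)}` of `[k]`, whose blocks are the
consecutive intervals `{1, …, a 0}, {a 0 + 1, …, a 0 + a 1}, …` of lengths `a 0, …, a (r-1)`. -/
def IsLayered {k : ℕ} (r : ℕ) (a : ℕ → ℕ) (τ : Finpartition (Finset.Icc 1 k)) : Prop :=
  τ.parts = (Finset.range r).image
    (fun j => Finset.Icc ((∑ i ∈ Finset.range j, a i) + 1) (∑ i ∈ Finset.range (j + 1), a i))

/-- A uniform set partition of `[n]` with block size `m`: it consists of `n/m` blocks each of
size `m`, and for every `0 ≤ j < m` the interval `S_j = {j·(n/m)+1, …, (j+1)·(n/m)}` contains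
exactly one element from each block. -/
def IsUniform (n m : ℕ) (σ : Finpartition (Finset.Icc 1 n)) : Prop :=
  σ.parts.card = n / m ∧ (∀ B ∈ σ.parts, B.card = m) ∧
    ∀ j < m, ∀ B ∈ σ.parts,
      (Finset.Icc (j * (n / m) + 1) ((j + 1) * (n / m)) ∩ B).card = 1

/-- `P` is the permutation partition of `[2m]` associated to the permutation `π` of `[m]`:
its blocks are `{i, m + π i}` for `i ∈ [m]` (with `Fin m` representing `[m]` via `i ↦ i + 1`). -/
def IsPermPartition (m : ℕ) (π : Equiv.Perm (Fin m))
    (P : Finpartition (Finset.Icc 1 (2 * m))) : Prop :=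
  P.parts = Finset.univ.image
    (fun i : Fin m => ({(i : ℕ) + 1, m + (π i : ℕ) + 1} : Finset ℕ))

/-!
Avoiding `123` means every block has at most two elements, and avoiding `12/34` then means that
every two-element block starts before any other two-element block ends. So there is a threshold
`t` with every pair `{i < j}` satisfying `i ≤ t < j`. Let `π` swap the two elements of each pair
and fix everything else. In the permutation partition of `[2m]`, `m = k + 1`, the positions
`i ≤ t` are sent to the left half and the positions `j > t` to `m + j` in the right half; blocks
of that partition meet each half once, and `i` and `m + j` share a block exactly when `π i = j`.
-/

open Finset

section SameBlock

variable {n : ℕ} {σ : Finpartition (Finset.Icc 1 n)} {i j l : ℕ}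

theorem SameBlock.refl_of_mem (σ : Finpartition (Finset.Icc 1 n)) (hi : i ∈ Icc 1 n) :
    SameBlock σ i i :=
  let ⟨B, hB, hiB⟩ := σ.exists_mem hi
  ⟨B, hB, hiB, hiB⟩

theorem SameBlock.symm (h : SameBlock σ i j) : SameBlock σ j i :=
  let ⟨B, hB, hi, hj⟩ := h
  ⟨B, hB, hj, hi⟩

theorem SameBlock.comm : SameBlock σ i j ↔ SameBlock σ j i :=
  ⟨SameBlock.symm, SameBlock.symm⟩

theorem SameBlock.trans (h₁ : SameBlock σ i j) (h₂ : SameBlock σ j l) : SameBlock σ i l := by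
  obtain ⟨B, hB, hi, hj⟩ := h₁
  obtain ⟨B', hB', hj', hl⟩ := h₂
  exact ⟨B, hB, hi, σ.eq_of_mem_parts hB' hB hj' hj ▸ hl⟩

theorem sameBlock_congr {i' j' : ℕ} (hi : SameBlock σ i i') (hj : SameBlock σ j j') :
    SameBlock σ i j ↔ SameBlock σ i' j' :=
  ⟨fun h => hi.symm.trans (h.trans hj), fun h => hi.trans (h.trans hj.symm)⟩

theorem SameBlock.mem_left (h : SameBlock σ i j) : i ∈ Icc 1 n :=
  let ⟨_, hB, hi, _⟩ := h
  σ.le hB hi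

theorem SameBlock.mem_right (h : SameBlock σ i j) : j ∈ Icc 1 n :=
  h.symm.mem_left

end SameBlock

section Patterns

variable {n : ℕ} {σ : Finpartition (Finset.Icc 1 n)}

theorem setPartContains_123 {p : Finpartition (Finset.Icc 1 3)} (hp : p.parts = {Icc 1 3})
    {x y z : ℕ} (hxy : x < y) (hyz : y < z) (h₁ : SameBlock σ x y) (h₂ : SameBlock σ y z) :
    SetPartContains σ p := by
  obtain ⟨B, hB, hxB, hyB⟩ := h₁
  obtain ⟨B', hB', hyB', hzB⟩ := h₂
  obtain rfl := σ.eq_of_mem_parts hB hB' hyB hyB'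
  let f : ℕ → ℕ := fun i => if i = 1 then x else if i = 2 then y else z
  have hf : ∀ i ∈ Icc 1 3, f i ∈ B := by
    intro i hi
    obtain ⟨hi1, hi3⟩ := mem_Icc.mp hi
    interval_cases i <;> simpa [f]
  refine ⟨f, fun i hi => σ.le hB (hf i hi), ?_, fun i hi j hj =>
    iff_of_true ⟨Icc 1 3, by simp [hp], hi, hj⟩ ⟨B, hB, hf i hi, hf j hj⟩⟩
  intro i hi j hj hij
  obtain ⟨hi1, hi3⟩ := mem_Icc.mp hi
  obtain ⟨hj1, hj3⟩ := mem_Icc.mp hj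
  interval_cases i <;> interval_cases j <;> simp [f] <;> omega

theorem setPartContains_12_34 {p : Finpartition (Finset.Icc 1 4)}
    (hp : p.parts = ({({1, 2} : Finset ℕ), ({3, 4} : Finset ℕ)} : Finset (Finset ℕ)))
    {a b c d : ℕ} (hab : a < b) (hbc : b < c) (hcd : c < d)
    (h₁ : SameBlock σ a b) (h₂ : SameBlock σ c d) (h₃ : ¬ SameBlock σ b c) :
    SetPartContains σ p := by
  let f : ℕ → ℕ := fun i => if i = 1 then a else if i = 2 then b else if i = 3 then c else d
  -- `f i` lies in the block of `g i`, which is `b` on the first pair and `c` on the second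
  let g : ℕ → ℕ := fun i => if i ≤ 2 then b else c
  have hfg : ∀ i ∈ Icc 1 4, SameBlock σ (f i) (g i) := by
    intro i hi
    obtain ⟨hi1, hi4⟩ := mem_Icc.mp hi
    interval_cases i
    exacts [h₁, SameBlock.refl_of_mem σ h₁.mem_right, SameBlock.refl_of_mem σ h₂.mem_left,
      h₂.symm]
  have hg : ∀ i j, SameBlock σ (g i) (g j) ↔ (i ≤ 2 ↔ j ≤ 2) := by
    have hcb : ¬ SameBlock σ c b := fun h => h₃ h.symm
    intro i j
    by_cases hi : i ≤ 2 <;> by_cases hj : j ≤ 2 <;>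
      simp [g, hi, hj, h₃, hcb, SameBlock.refl_of_mem σ h₁.mem_right,
        SameBlock.refl_of_mem σ h₂.mem_left]
  have hp' : ∀ i ∈ Icc 1 4, ∀ j ∈ Icc 1 4, SameBlock p i j ↔ (i ≤ 2 ↔ j ≤ 2) := by
    intro i hi j hj
    obtain ⟨hi1, hi4⟩ := mem_Icc.mp hi
    obtain ⟨hj1, hj4⟩ := mem_Icc.mp hj
    interval_cases i <;> interval_cases j <;> simp [SameBlock, hp]
  refine ⟨f, fun i hi => (hfg i hi).mem_left, ?_, fun i hi j hj => ?_⟩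
  · intro i hi j hj hij
    obtain ⟨hi1, hi4⟩ := mem_Icc.mp hi
    obtain ⟨hj1, hj4⟩ := mem_Icc.mp hj
    interval_cases i <;> interval_cases j <;> simp [f] <;> omega
  · rw [hp' i hi j hj, sameBlock_congr (hfg i hi) (hfg j hj), hg]

end Patterns

section Avoidance

variable {k : ℕ} {τ : Finpartition (Finset.Icc 1 k)} {i j l : ℕ}

theorem card_le_two_of_avoids_123
    (h3 : ∀ p : Finpartition (Finset.Icc 1 3), p.parts = {Finset.Icc 1 3} →
      ¬ SetPartContains τ p) :
    ∀ B ∈ τ.parts, #B ≤ 2 := by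
  intro B hB
  by_contra! hcard
  have hsame : ∀ r s : Fin #B, SameBlock τ (B.orderEmbOfFin rfl r) (B.orderEmbOfFin rfl s) :=
    fun r s => ⟨B, hB, B.orderEmbOfFin_mem rfl r, B.orderEmbOfFin_mem rfl s⟩
  have hmono := (B.orderEmbOfFin rfl).strictMono
  exact h3 (Finpartition.indiscrete (by decide)) rfl <| setPartContains_123 rfl
    (hmono (show (⟨0, by omega⟩ : Fin #B) < ⟨1, by omega⟩ by simp))
    (hmono (show (⟨1, by omega⟩ : Fin #B) < ⟨2, by omega⟩ by simp)) (hsame _ _) (hsame _ _)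

theorem SameBlock.right_unique (hτ : ∀ B ∈ τ.parts, #B ≤ 2) (hj : SameBlock τ i j)
    (hl : SameBlock τ i l) (hji : j ≠ i) (hli : l ≠ i) : j = l := by
  obtain ⟨B, hB, hiB, hjB⟩ := hj
  obtain ⟨B', hB', hiB', hlB⟩ := hl
  obtain rfl := τ.eq_of_mem_parts hB hB' hiB hiB'
  by_contra hjl
  have hthree : #{i, j, l} = 3 := card_eq_three.mpr ⟨i, j, l, hji.symm, hli.symm, hjl, rfl⟩
  have := card_le_card (insert_subset hiB (insert_subset hjB (singleton_subset_iff.mpr hlB)))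
  have := hτ B hB
  omega

theorem exists_threshold (hτ : ∀ B ∈ τ.parts, #B ≤ 2)
    (h4 : ∀ p : Finpartition (Finset.Icc 1 4),
      p.parts = ({({1, 2} : Finset ℕ), ({3, 4} : Finset ℕ)} : Finset (Finset ℕ)) →
      ¬ SetPartContains τ p) :
    ∃ t, ∀ i j, i < j → SameBlock τ i j → i ≤ t ∧ t < j := by
  have left_lt_right : ∀ i j l j', i < j → SameBlock τ i j → l < j' → SameBlock τ l j' →
      l < j := by
    intro i j l j' hij hs hlj' hs'
    by_contra! hjl
    rcases hjl.eq_or_lt with rfl | hjl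
    · exact hlj'.ne (hs.right_unique hτ (hs.trans hs') hij.ne' (hij.trans hlj').ne')
    · let p : Finpartition (Finset.Icc 1 4) :=
        ⟨{({1, 2} : Finset ℕ), ({3, 4} : Finset ℕ)}, by decide, by decide, by decide⟩
      refine h4 p rfl (setPartContains_12_34 rfl hij hjl hlj' hs hs' fun hjl' => ?_)
      exact hjl.ne (hs.right_unique hτ (hs.trans hjl') hij.ne' (hij.trans hjl).ne')
  classical
  refine ⟨((Icc 1 k).filter fun i => ∃ j, i < j ∧ SameBlock τ i j).sup id,
    fun i j hij hs => ⟨?_, ?_⟩⟩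
  · exact le_sup (f := id) (mem_filter.mpr ⟨hs.mem_left, j, hij, hs⟩)
  · refine (Finset.sup_lt_iff (i.zero_le.trans_lt hij)).mpr fun l hl => ?_
    obtain ⟨-, j', hlj', hs'⟩ := mem_filter.mp hl
    exact left_lt_right i j l j' hij hs hlj' hs'

end Avoidance

section Mate

variable {k : ℕ} (τ : Finpartition (Finset.Icc 1 k)) {i j : ℕ}

open Classical in
noncomputable def mate (i : ℕ) : ℕ :=
  if h : ∃ j ≠ i, SameBlock τ i j then h.choose else i

theorem mate_eq_self_or_sameBlock (i : ℕ) : mate τ i = i ∨ SameBlock τ i (mate τ i) := by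
  unfold mate
  split_ifs with h
  exacts [Or.inr h.choose_spec.2, Or.inl rfl]

variable {τ}

theorem mate_eq_iff (hτ : ∀ B ∈ τ.parts, #B ≤ 2) (hji : j ≠ i) :
    mate τ i = j ↔ SameBlock τ i j := by
  refine ⟨fun h => ?_, fun hs => ?_⟩
  · rcases mate_eq_self_or_sameBlock τ i with h' | h'
    · exact absurd (h'.symm.trans h) hji.symm
    · exact h ▸ h'
  · have h : ∃ j ≠ i, SameBlock τ i j := ⟨j, hji, hs⟩
    rw [mate, dif_pos h]
    exact h.choose_spec.2.right_unique hτ hs h.choose_spec.1 hji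

theorem mate_involutive (hτ : ∀ B ∈ τ.parts, #B ≤ 2) : Function.Involutive (mate τ) := by
  intro i
  by_cases h : mate τ i = i
  · rw [h, h]
  · exact (mate_eq_iff hτ (Ne.symm h)).mpr ((mate_eq_iff hτ h).mp rfl).symm

theorem mate_mem_Icc {m : ℕ} (hkm : k ≤ m) (hi : i ∈ Icc 1 m) : mate τ i ∈ Icc 1 m := by
  rcases mate_eq_self_or_sameBlock τ i with h | h
  · rwa [h]
  · exact Icc_subset_Icc_right hkm h.mem_right

end Mate

section PermPartition

variable {m : ℕ}

/-- The permutation of `Fin m` acting as `g` on `[m]`, under `x ↦ x + 1`. -/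
def finPermOfInvolutive (g : ℕ → ℕ) (hg : Function.Involutive g)
    (hmaps : ∀ i ∈ Icc 1 m, g i ∈ Icc 1 m) : Equiv.Perm (Fin m) :=
  Function.Involutive.toPerm
    (fun x => ⟨g (x + 1) - 1, by have := mem_Icc.mp (hmaps (x + 1) (by simp)); omega⟩)
    (fun x => by
      have := mem_Icc.mp (hmaps (x + 1) (by simp))
      ext
      simp only [Nat.sub_add_cancel this.1, hg (x + 1), Nat.add_sub_cancel])

theorem finPermOfInvolutive_apply_add_one {g : ℕ → ℕ} (hg : Function.Involutive g)
    (hmaps : ∀ i ∈ Icc 1 m, g i ∈ Icc 1 m) (x : Fin m) :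
    (finPermOfInvolutive g hg hmaps x : ℕ) + 1 = g (x + 1) :=
  Nat.sub_add_cancel (mem_Icc.mp (hmaps (x + 1) (by simp))).1

variable (π : Equiv.Perm (Fin m)) {u v : ℕ}

def permBlock (i : Fin m) : Finset ℕ := {(i : ℕ) + 1, m + (π i : ℕ) + 1}

variable {π}

theorem mem_permBlock {i : Fin m} : v ∈ permBlock π i ↔ v = i + 1 ∨ v = m + π i + 1 := by
  simp [permBlock]

theorem eq_of_mem_permBlock {i j : Fin m} (hi : v ∈ permBlock π i) (hj : v ∈ permBlock π j) :
    i = j := by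
  rw [mem_permBlock] at hi hj
  have := i.2; have := j.2; have := (π i).2; have := (π j).2
  rcases hi with rfl | rfl <;> rcases hj with h | h
  · exact Fin.ext (by omega)
  · omega
  · omega
  · exact π.injective (Fin.ext (by omega))

theorem exists_mem_permBlock (hv : v ∈ Icc 1 (2 * m)) : ∃ i, v ∈ permBlock π i := by
  obtain ⟨hv1, hv2⟩ := mem_Icc.mp hv
  by_cases hvm : v ≤ m
  · exact ⟨⟨v - 1, by omega⟩, mem_permBlock.mpr (Or.inl (by simp; omega))⟩
  · refine ⟨π.symm ⟨v - m - 1, by omega⟩, mem_permBlock.mpr (Or.inr ?_)⟩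
    simp only [Equiv.apply_symm_apply]
    omega

variable (π)

def permPartition : Finpartition (Finset.Icc 1 (2 * m)) :=
  Finpartition.ofExistsUnique (univ.image (permBlock π))
    (by
      simp only [mem_image, mem_univ, true_and, forall_exists_index, forall_apply_eq_imp_iff]
      intro i v hv
      have := i.2; have := (π i).2
      rw [mem_permBlock] at hv
      rw [mem_Icc]
      omega)
    (fun v hv => by
      obtain ⟨i, hi⟩ := exists_mem_permBlock hv
      refine ⟨permBlock π i, ⟨mem_image_of_mem _ (mem_univ i), hi⟩, ?_⟩
      rintro B ⟨hB, hvB⟩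
      obtain ⟨j, -, rfl⟩ := mem_image.mp hB
      rw [eq_of_mem_permBlock hvB hi])
    (by simp [permBlock])

theorem isPermPartition_permPartition : IsPermPartition m π (permPartition π) := rfl

variable {π}

theorem sameBlock_permPartition_iff :
    SameBlock (permPartition π) u v ↔ ∃ i, u ∈ permBlock π i ∧ v ∈ permBlock π i := by
  simp [SameBlock, permPartition]

theorem eq_of_sameBlock_permPartition_of_le (hu : u ≤ m) (hv : v ≤ m)
    (h : SameBlock (permPartition π) u v) : u = v := by
  obtain ⟨i, hui, hvi⟩ := sameBlock_permPartition_iff.mp h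
  rw [mem_permBlock] at hui hvi
  omega

theorem eq_of_sameBlock_permPartition_of_lt (hu : m < u) (hv : m < v)
    (h : SameBlock (permPartition π) u v) : u = v := by
  obtain ⟨i, hui, hvi⟩ := sameBlock_permPartition_iff.mp h
  rw [mem_permBlock] at hui hvi
  omega

theorem sameBlock_permPartition_iff_of_le_of_lt {g : ℕ → ℕ}
    (hg : ∀ x : Fin m, (π x : ℕ) + 1 = g (x + 1)) (hu : u ∈ Icc 1 m) (hv : m < v) :
    SameBlock (permPartition π) u v ↔ m + g u = v := by
  obtain ⟨hu1, hum⟩ := mem_Icc.mp hu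
  let i : Fin m := ⟨u - 1, by omega⟩
  have hui : (i : ℕ) + 1 = u := Nat.sub_add_cancel hu1
  rw [sameBlock_permPartition_iff]
  constructor
  · rintro ⟨j, huj, hvj⟩
    rw [mem_permBlock] at huj hvj
    obtain rfl : j = i := Fin.ext (by simp only [i]; omega)
    rw [← hui, ← hg]
    omega
  · rintro rfl
    refine ⟨i, mem_permBlock.mpr (Or.inl hui.symm), mem_permBlock.mpr (Or.inr ?_)⟩
    rw [← hui, ← hg, add_assoc]

end PermPartition

theorem setPartContains_permPartition_mate {k : ℕ} {τ : Finpartition (Finset.Icc 1 k)}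
    (hτ : ∀ B ∈ τ.parts, #B ≤ 2) {t : ℕ}
    (ht : ∀ i j, i < j → SameBlock τ i j → i ≤ t ∧ t < j) :
    SetPartContains (permPartition (finPermOfInvolutive (mate τ) (mate_involutive hτ)
      fun _ => mate_mem_Icc (m := k + 1) k.le_succ)) τ := by
  have hπ := finPermOfInvolutive_apply_add_one (mate_involutive hτ)
    fun _ => mate_mem_Icc (m := k + 1) k.le_succ
  let f : ℕ → ℕ := fun i => if i ≤ t then i else k + 1 + i
  have hf : ∀ i ∈ Icc 1 k, f i ∈ Icc 1 (2 * (k + 1)) := by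
    intro i hi
    simp only [mem_Icc, f] at hi ⊢
    split_ifs <;> omega
  refine ⟨f, hf, fun i hi j hj hij => ?_, fun i hi j hj => ?_⟩
  · simp only [f]
    split_ifs <;> omega
  wlog hij : i ≤ j generalizing i j
  · exact SameBlock.comm.trans ((this j hj i hi (by omega)).trans SameBlock.comm)
  rcases hij.eq_or_lt with rfl | hij
  · exact iff_of_true (.refl_of_mem τ hi) (.refl_of_mem _ (hf i hi))
  obtain ⟨hi1, hik⟩ := mem_Icc.mp hi
  obtain ⟨-, hjk⟩ := mem_Icc.mp hj
  by_cases hjt : j ≤ t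
  · have hit : i ≤ t := by omega
    simp only [f, if_pos hit, if_pos hjt]
    refine iff_of_false (fun h => ?_) (fun h => ?_)
    · have := (ht i j hij h).2
      omega
    · exact hij.ne (eq_of_sameBlock_permPartition_of_le (by omega) (by omega) h)
  by_cases hit : i ≤ t
  · simp only [f, if_pos hit, if_neg hjt]
    rw [sameBlock_permPartition_iff_of_le_of_lt hπ (mem_Icc.mpr ⟨hi1, by omega⟩) (by omega),
      Nat.add_left_cancel_iff, mate_eq_iff hτ hij.ne']
  · simp only [f, if_neg hit, if_neg hjt]
    refine iff_of_false (fun h => hit (ht i j hij h).1) (fun h => ?_)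
    have := eq_of_sameBlock_permPartition_of_lt (by omega) (by omega) h
    omega

/-- If a set partition `τ` of `[k]` avoids both `123` and `12/34`, then `τ`
is contained in the permutation partition of `[2m]` associated to some permutation of `[m]`. -/
theorem contained_in_perm_partition (k : ℕ) (τ : Finpartition (Finset.Icc 1 k))
    (h3 : ∀ p : Finpartition (Finset.Icc 1 3), p.parts = {Finset.Icc 1 3} →
      ¬ SetPartContains τ p)
    (h4 : ∀ p : Finpartition (Finset.Icc 1 4),
      p.parts = ({({1, 2} : Finset ℕ), ({3, 4} : Finset ℕ)} : Finset (Finset ℕ)) →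
      ¬ SetPartContains τ p) :
    ∃ m : ℕ, 0 < m ∧ ∃ π : Equiv.Perm (Fin m),
      ∃ P : Finpartition (Finset.Icc 1 (2 * m)),
        IsPermPartition m π P ∧ SetPartContains P τ := by
  have hτ := card_le_two_of_avoids_123 h3
  obtain ⟨t, ht⟩ := exists_threshold hτ h4
  exact ⟨k + 1, k.succ_pos, _, _, isPermPartition_permPartition _,
    setPartContains_permPartition_mate hτ ht⟩
end

section
/- Let σ be a permutation of [n] and σ' a permutation of [k]. The permutation partition of [2n] associated to σ contains the permutation partition of [2k] associated to σ' if and only if σ contains σ' as a pattern, i.e. there is a strictly increasing function g : [k] → [n] such that for all i, j ∈ [k], σ'(i) < σ'(j) if and only if σ(g(i)) < σ(g(j)). -/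
/- Label `[2m]` by `Fin m ⊕ₗ Fin m`, the left copy filling `{1, …, m}` and the right
copy `{m + 1, …, 2m}`; the permutation partition of `π` then pairs `inl i` with `inr (π i)`.
An order embedding of permutation partitions must send each pair `(inl i, inr (σ' i))` to a pair
`(inl (g i), inr (σ (g i)))`, and comparing the images of the right halves shows that `g` is an
occurrence of the pattern `σ'` in `σ`.  Conversely an occurrence `g` extends to the embedding
`Sum.map g (σ ∘ g ∘ σ'.symm)`. -/

open Finset

theorem setPartContains_iff_exists_strictMono {α β : Type*} [LinearOrder α] [LinearOrder β]
    {n k : ℕ} {P : Finpartition (Icc 1 n)} {P' : Finpartition (Icc 1 k)} {e : α → ℕ}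
    {e' : β → ℕ} (he : StrictMono e) (he' : StrictMono e') (he_range : Set.range e = ↑(Icc 1 k))
    (he'_range : Set.range e' = ↑(Icc 1 n)) :
    SetPartContains P P' ↔ ∃ F : α → β, StrictMono F ∧
      ∀ x y, SameBlock P' (e x) (e y) ↔ SameBlock P (e' (F x)) (e' (F y)) := by
  have he_iff : ∀ a, (∃ x, e x = a) ↔ a ∈ Icc 1 k := fun a => Set.ext_iff.1 he_range a
  have he'_iff : ∀ a, (∃ y, e' y = a) ↔ a ∈ Icc 1 n := fun a => Set.ext_iff.1 he'_range a
  have he_mem : ∀ x, e x ∈ Icc 1 k := fun x => (he_iff _).1 ⟨x, rfl⟩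
  constructor
  · rintro ⟨f, hf_mem, hf_mono, hf_block⟩
    choose F hF using fun x => (he'_iff _).2 (hf_mem _ (he_mem x))
    refine ⟨F, fun x y hxy => he'.lt_iff_lt.1 ?_, fun x y => ?_⟩
    · rw [hF, hF]
      exact hf_mono _ (he_mem x) _ (he_mem y) (he hxy)
    · rw [hF, hF]
      exact hf_block _ (he_mem x) _ (he_mem y)
  · rintro ⟨F, hF_mono, hF_block⟩
    choose x hx using fun a (ha : a ∈ Icc 1 k) => (he_iff a).2 ha
    refine ⟨fun a => if ha : a ∈ Icc 1 k then e' (F (x a ha)) else 0,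
      fun a ha => ?_, fun a ha b hb hab => ?_, fun a ha b hb => ?_⟩
    · simpa only [dif_pos ha] using (he'_iff _).1 ⟨_, rfl⟩
    · rw [← hx a ha, ← hx b hb] at hab
      simpa only [dif_pos ha, dif_pos hb] using he' (hF_mono (he.lt_iff_lt.1 hab))
    · conv_lhs => rw [← hx a ha, ← hx b hb]
      simpa only [dif_pos ha, dif_pos hb] using hF_block _ _

theorem Sum.Lex.strictMono_map {α β γ δ : Type*} [Preorder α] [Preorder β] [Preorder γ]
    [Preorder δ] {f : α → γ} {g : β → δ} (hf : StrictMono f) (hg : StrictMono g) :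
    StrictMono (toLex ∘ Sum.map f g ∘ ofLex) := by
  intro x y h
  cases x with | h x => ?_
  cases y with | h y => ?_
  rcases x with a | b <;> rcases y with a' | b'
  · exact Sum.Lex.inl_lt_inl_iff.2 (hf (Sum.Lex.inl_lt_inl_iff.1 h))
  · exact Sum.Lex.inl_lt_inr _ _
  · exact absurd h Sum.Lex.not_inr_lt_inl
  · exact Sum.Lex.inr_lt_inr_iff.2 (hg (Sum.Lex.inr_lt_inr_iff.1 h))

namespace PermPartition

variable {m : ℕ}

def pos (m : ℕ) (x : Fin m ⊕ₗ Fin m) : ℕ :=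
  Sum.elim (fun i : Fin m => (i : ℕ) + 1) (fun j : Fin m => m + (j : ℕ) + 1) (ofLex x)

def block (π : Equiv.Perm (Fin m)) (x : Fin m ⊕ₗ Fin m) : Fin m :=
  Sum.elim id π.symm (ofLex x)

@[simp] theorem pos_inl (i : Fin m) : pos m (toLex (.inl i)) = i + 1 := rfl

@[simp] theorem pos_inr (j : Fin m) : pos m (toLex (.inr j)) = m + j + 1 := rfl

@[simp] theorem block_inl (π : Equiv.Perm (Fin m)) (i : Fin m) : block π (toLex (.inl i)) = i :=
  rfl

@[simp] theorem block_inr (π : Equiv.Perm (Fin m)) (j : Fin m) :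
    block π (toLex (.inr j)) = π.symm j :=
  rfl

theorem pos_strictMono (m : ℕ) : StrictMono (pos m) := by
  intro x y h
  cases x with | h x => ?_
  cases y with | h y => ?_
  rcases x with i | j <;> rcases y with i' | j'
  · simpa using Sum.Lex.inl_lt_inl_iff.1 h
  · simp only [pos_inl, pos_inr]; omega
  · exact absurd h Sum.Lex.not_inr_lt_inl
  · simpa using Sum.Lex.inr_lt_inr_iff.1 h

theorem range_pos (m : ℕ) : Set.range (pos m) = ↑(Icc 1 (2 * m)) := by
  ext a
  simp only [Set.mem_range, Finset.coe_Icc, Set.mem_Icc]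
  constructor
  · rintro ⟨x, rfl⟩
    cases x with | h x => ?_
    rcases x with i | j
    · simp only [pos_inl]; omega
    · simp only [pos_inr]; omega
  · rintro ⟨h1, h2⟩
    rcases le_or_gt a m with h | h
    · exact ⟨toLex (.inl ⟨a - 1, by omega⟩), by simp only [pos_inl]; omega⟩
    · exact ⟨toLex (.inr ⟨a - m - 1, by omega⟩), by simp only [pos_inr]; omega⟩

theorem pos_mem_pair_iff (π : Equiv.Perm (Fin m)) (x : Fin m ⊕ₗ Fin m) (i : Fin m) :
    pos m x ∈ ({(i : ℕ) + 1, m + (π i : ℕ) + 1} : Finset ℕ) ↔ block π x = i := by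
  cases x with | h x => ?_
  rcases x with j | j <;> simp only [Finset.mem_insert, Finset.mem_singleton]
  · simp only [pos_inl, block_inl, Fin.ext_iff]; omega
  · simp only [pos_inr, block_inr, Equiv.symm_apply_eq, Fin.ext_iff]; omega

theorem exists_eq_inl_inr_of_block_eq (π : Equiv.Perm (Fin m)) {x y : Fin m ⊕ₗ Fin m}
    (hxy : x < y) (h : block π x = block π y) :
    ∃ a, x = toLex (.inl a) ∧ y = toLex (.inr (π a)) := by
  cases x with | h x => ?_
  cases y with | h y => ?_
  rcases x with i | i <;> rcases y with j | j
  · exact absurd h (Sum.Lex.inl_lt_inl_iff.1 hxy).ne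
  · exact ⟨i, rfl, by rw [block_inl, block_inr] at h; rw [h, Equiv.apply_symm_apply]⟩
  · exact absurd hxy Sum.Lex.not_inr_lt_inl
  · exact absurd (π.symm.injective h) (Sum.Lex.inr_lt_inr_iff.1 hxy).ne

variable {n k : ℕ} (σ : Equiv.Perm (Fin n)) (σ' : Equiv.Perm (Fin k))

theorem exists_pattern_of_strictMono {F : Fin k ⊕ₗ Fin k → Fin n ⊕ₗ Fin n} (hF : StrictMono F)
    (hF_block : ∀ x y, block σ' x = block σ' y → block σ (F x) = block σ (F y)) :
    ∃ g : Fin k → Fin n, StrictMono g ∧ ∀ i j, σ' i < σ' j ↔ σ (g i) < σ (g j) := by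
  have hpair : ∀ i, ∃ a, F (toLex (.inl i)) = toLex (.inl a) ∧
      F (toLex (.inr (σ' i))) = toLex (.inr (σ a)) := fun i =>
    exists_eq_inl_inr_of_block_eq σ (hF (Sum.Lex.inl_lt_inr _ _)) (hF_block _ _ (by simp))
  choose g hg_inl hg_inr using hpair
  refine ⟨g, fun i j hij => ?_, fun i j => ?_⟩
  · simpa only [hg_inl, Sum.Lex.inl_lt_inl_iff] using hF (Sum.Lex.inl_lt_inl_iff.2 hij)
  · rw [← Sum.Lex.inr_lt_inr_iff (α := Fin k), ← hF.lt_iff_lt, hg_inr, hg_inr,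
      Sum.Lex.inr_lt_inr_iff]

theorem exists_strictMono_of_pattern {g : Fin k → Fin n} (hg : StrictMono g)
    (hpat : ∀ i j, σ' i < σ' j ↔ σ (g i) < σ (g j)) :
    ∃ F : Fin k ⊕ₗ Fin k → Fin n ⊕ₗ Fin n, StrictMono F ∧
      ∀ x y, block σ' x = block σ' y ↔ block σ (F x) = block σ (F y) := by
  have hright : StrictMono (σ ∘ g ∘ σ'.symm) := fun j j' h => (hpat _ _).1 (by simpa using h)
  have hblock : ∀ x, block σ (toLex (Sum.map g (σ ∘ g ∘ σ'.symm) (ofLex x))) = g (block σ' x) := by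
    intro x
    cases x with | h x => ?_
    rcases x with i | j <;> simp
  refine ⟨_, Sum.Lex.strictMono_map hg hright, fun x y => ?_⟩
  simp only [Function.comp_apply, hblock, hg.injective.eq_iff]

theorem exists_strictMono_block_iff :
    (∃ F : Fin k ⊕ₗ Fin k → Fin n ⊕ₗ Fin n, StrictMono F ∧
      ∀ x y, block σ' x = block σ' y ↔ block σ (F x) = block σ (F y)) ↔
    ∃ g : Fin k → Fin n, StrictMono g ∧ ∀ i j, σ' i < σ' j ↔ σ (g i) < σ (g j) :=
  ⟨fun ⟨_, hF, hF_block⟩ => exists_pattern_of_strictMono σ σ' hF fun x y => (hF_block x y).1,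
    fun ⟨_, hg, hpat⟩ => exists_strictMono_of_pattern σ σ' hg hpat⟩

theorem _root_.IsPermPartition.sameBlock_pos_iff {m : ℕ} {π : Equiv.Perm (Fin m)}
    {P : Finpartition (Icc 1 (2 * m))} (hP : IsPermPartition m π P) (x y : Fin m ⊕ₗ Fin m) :
    SameBlock P (pos m x) (pos m y) ↔ block π x = block π y := by
  unfold SameBlock
  rw [hP]
  simp only [Finset.mem_image, Finset.mem_univ, true_and, exists_exists_eq_and, pos_mem_pair_iff]
  exact ⟨fun ⟨_, hx, hy⟩ => hx.trans hy.symm, fun h => ⟨_, h, rfl⟩⟩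

end PermPartition

/-- The permutation partition of `[2n]` associated to `σ` contains the
permutation partition of `[2k]` associated to `σ'` iff `σ` contains `σ'` as a pattern. -/
theorem perm_partition_contains_iff (n k : ℕ) (σ : Equiv.Perm (Fin n))
    (σ' : Equiv.Perm (Fin k))
    (P : Finpartition (Finset.Icc 1 (2 * n))) (P' : Finpartition (Finset.Icc 1 (2 * k)))
    (hP : IsPermPartition n σ P) (hP' : IsPermPartition k σ' P') :
    SetPartContains P P' ↔
      ∃ g : Fin k → Fin n, StrictMono g ∧
        ∀ i j : Fin k, σ' i < σ' j ↔ σ (g i) < σ (g j) := by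
  rw [setPartContains_iff_exists_strictMono (PermPartition.pos_strictMono k)
    (PermPartition.pos_strictMono n) (PermPartition.range_pos k) (PermPartition.range_pos n)]
  simp only [hP.sameBlock_pos_iff, hP'.sameBlock_pos_iff]
  exact PermPartition.exists_strictMono_block_iff σ σ'
end
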